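/- Indefinite preconditioning for PCG: let A, P ∈ S₊₊ⁿ, C ∈ S₊₊ʳ, B ∈ ℝ^{n×r}, x₀, f ∈ ℝⁿ, g ∈ ℝʳ. Let (u_k, v_k) be the k-th PCG iterate for the system with matrix [[A, B], [Bᵀ, −C]], right-hand side (f, g), preconditioner [[P, B], [Bᵀ, −C]], and initial point (x₀, C⁻¹(Bᵀx₀ − g)); let x_k be the k-th PCG iterate for the system with matrix A + BC⁻¹Bᵀ, right-hand side f + BC⁻¹g, preconditioner P + BC⁻¹Bᵀ, and initial point x₀. If all scalar denominators ⟨p_j, Ap_j⟩ and ⟨r_j, z_j⟩ appearing in both PCG recursions through step k are nonzero, then u_k = x_k and v_k = C⁻¹(Bᵀx_k − g). -/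

import Mathlib

open Matrix
open scoped Kronecker

noncomputable section

/-- Euclidean norm of a vector. -/
def vnorm {I : Type*} [Fintype I] (v : I → ℝ) : ℝ := Real.sqrt (∑ i, v i ^ 2)

/-- Frobenius norm of a matrix. -/
def frobNorm {I J : Type*} [Fintype I] [Fintype J] (A : Matrix I J ℝ) : ℝ :=
  Real.sqrt (∑ i, ∑ j, A i j ^ 2)

/-- Spectral norm (ℓ₂ operator norm) of a matrix. -/
def specNorm {I J : Type*} [Fintype I] [Fintype J] (A : Matrix I J ℝ) : ℝ :=
  sSup {c | ∃ v : J → ℝ, vnorm v ≤ 1 ∧ c = vnorm (A *ᵥ v)}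

/-- Largest (real) eigenvalue of a square matrix. -/
def lmax {I : Type*} [Fintype I] (A : Matrix I I ℝ) : ℝ :=
  sSup {t | ∃ v : I → ℝ, v ≠ 0 ∧ A *ᵥ v = t • v}

/-- Smallest (real) eigenvalue of a square matrix. -/
def lmin {I : Type*} [Fintype I] (A : Matrix I I ℝ) : ℝ :=
  sInf {t | ∃ v : I → ℝ, v ≠ 0 ∧ A *ᵥ v = t • v}

/-- Column-stacking vectorization `vec`: `vecM X (j, i) = X i j`. -/
def vecM {J : Type*} (X : Matrix J J ℝ) : J × J → ℝ := fun p => X p.2 p.1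

/-- `Ψ` is an orthonormal basis matrix for the space of vectorized symmetric matrices:
`ΨᵀΨ = I` and `ΨΨᵀ` is the orthogonal projection onto vectorized symmetric matrices. -/
def IsSymBasis {J K : Type*} [Fintype J] [Fintype K] [DecidableEq K]
    (Ψ : Matrix (J × J) K ℝ) : Prop :=
  Ψᵀ * Ψ = 1 ∧ ∀ X : Matrix J J ℝ, Ψ *ᵥ (Ψᵀ *ᵥ vecM X) = vecM ((1/2 : ℝ) • (X + Xᵀ))

/-- Symmetric vectorization with respect to the basis matrix `Ψ`. -/
def svec {J K : Type*} [Fintype J] (Ψ : Matrix (J × J) K ℝ) (X : Matrix J J ℝ) : K → ℝ :=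
  Ψᵀ *ᵥ vecM X

/-- Symmetric Kronecker product with respect to the basis matrices `Ψ₁, Ψ₂`. -/
def skron {J J' K K' : Type*} [Fintype J] [Fintype J']
    (Ψ₁ : Matrix (J × J) K ℝ) (Ψ₂ : Matrix (J' × J') K' ℝ)
    (A B : Matrix J J' ℝ) : Matrix K K' ℝ :=
  (1/2 : ℝ) • (Ψ₁ᵀ * ((A ⊗ₖ B + B ⊗ₖ A) * Ψ₂))

/-- The square root `Matrix.PosSemidef.sqrt` of the older Mathlib (removed since). -/
def posSemidefSqrt {J : Type*} [Fintype J] [DecidableEq J] {A : Matrix J J ℝ}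
    (hA : A.PosSemidef) : Matrix J J ℝ :=
  hA.1.eigenvectorUnitary.1 * diagonal ((↑) ∘ (√·) ∘ hA.1.eigenvalues) *
    (star hA.1.eigenvectorUnitary : Matrix J J ℝ)

/-- Positive semidefinite square root (junk value `0` off the PSD cone). -/
def psqrt {J : Type*} [Fintype J] [DecidableEq J] (A : Matrix J J ℝ) : Matrix J J ℝ :=
  @dite _ A.PosSemidef (Classical.dec _) (fun h => posSemidefSqrt h) (fun _ => 0)

/-- Condition number in spectral norm. -/
def condNum {J : Type*} [Fintype J] [DecidableEq J] (M : Matrix J J ℝ) : ℝ :=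
  specNorm M * specNorm M⁻¹

/-- Assumption A1: `W` is the Nesterov--Todd scaling point of a well-centered
primal-dual pair `(X, S)` that is `O(μ)`-close to a strictly complementary solution. -/
def A1 {n : ℕ} (μ L δ χ₁ : ℝ) (W X S Xs Ss : Matrix (Fin n) (Fin n) ℝ) : Prop :=
  X.PosDef ∧ S.PosDef ∧ Xs.PosSemidef ∧ Ss.PosSemidef ∧ Xs * Ss = 0 ∧
    (Xs + Ss - χ₁⁻¹ • (1 : Matrix (Fin n) (Fin n) ℝ)).PosSemidef ∧
    ((1 : Matrix (Fin n) (Fin n) ℝ) - (Xs + Ss)).PosSemidef ∧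
    W = psqrt X * (psqrt (psqrt X * S * psqrt X))⁻¹ * psqrt X ∧
    specNorm ((1/μ) • (psqrt X * S * psqrt X) - 1) ≤ δ ∧
    specNorm (X - Xs) ≤ L * μ ∧ specNorm (S - Ss) ≤ L

/-- The preconditioned conjugate gradient trajectory: the state `(x, r, z, p)`
after `k` iterations of PCG for `M x = b`, preconditioner `P`, initial point `x₀`. -/
def pcgState {I : Type*} [Fintype I] [DecidableEq I]
    (M P : Matrix I I ℝ) (b x0 : I → ℝ) : ℕ → (I → ℝ) × (I → ℝ) × (I → ℝ) × (I → ℝ)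
  | 0 => (x0, b - M *ᵥ x0, P⁻¹ *ᵥ (b - M *ᵥ x0), P⁻¹ *ᵥ (b - M *ᵥ x0))
  | (j + 1) =>
    let s := pcgState M P b x0 j
    let α := (s.2.1 ⬝ᵥ s.2.2.1) / (s.2.2.2 ⬝ᵥ (M *ᵥ s.2.2.2))
    let x' := s.1 + α • s.2.2.2
    let r' := s.2.1 - α • (M *ᵥ s.2.2.2)
    let z' := P⁻¹ *ᵥ r'
    let β := (r' ⬝ᵥ z') / (s.2.1 ⬝ᵥ s.2.2.1)
    (x', r', z', z' + β • s.2.2.2)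

/-- One step of the PCG recursion. -/
def pcgStep {I : Type*} [Fintype I] [DecidableEq I]
    (M P : Matrix I I ℝ) (s : (I → ℝ) × (I → ℝ) × (I → ℝ) × (I → ℝ)) :
    (I → ℝ) × (I → ℝ) × (I → ℝ) × (I → ℝ) :=
  let α := (s.2.1 ⬝ᵥ s.2.2.1) / (s.2.2.2 ⬝ᵥ (M *ᵥ s.2.2.2))
  let x' := s.1 + α • s.2.2.2
  let r' := s.2.1 - α • (M *ᵥ s.2.2.2)
  let z' := P⁻¹ *ᵥ r'
  let β := (r' ⬝ᵥ z') / (s.2.1 ⬝ᵥ s.2.2.1)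
  (x', r', z', z' + β • s.2.2.2)

lemma pcgState_succ {I : Type*} [Fintype I] [DecidableEq I]
    (M P : Matrix I I ℝ) (b x0 : I → ℝ) (j : ℕ) :
    pcgState M P b x0 (j + 1) = pcgStep M P (pcgState M P b x0 j) := rfl

/-- Proposition 2.3, indefinite preconditioning for PCG:
PCG on the indefinite augmented system with the indefinite preconditioner produces
iterates that coincide with PCG on the positive definite Schur complement system. -/
theorem stmt13 {n r : ℕ}
    (A P : Matrix (Fin n) (Fin n) ℝ) (hA : A.PosDef) (hP : P.PosDef)
    (C : Matrix (Fin r) (Fin r) ℝ) (hC : C.PosDef)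
    (B : Matrix (Fin n) (Fin r) ℝ)
    (x₀ f : Fin n → ℝ) (g : Fin r → ℝ) (k : ℕ)
    -- the indefinite system, preconditioner, right-hand side, initial point
    (M₁ P₁ : Matrix (Fin n ⊕ Fin r) (Fin n ⊕ Fin r) ℝ)
    (hM₁ : M₁ = Matrix.fromBlocks A B Bᵀ (-C))
    (hP₁ : P₁ = Matrix.fromBlocks P B Bᵀ (-C))
    (b₁ : Fin n ⊕ Fin r → ℝ) (hb₁ : b₁ = Sum.elim f g)
    (w₀ : Fin n ⊕ Fin r → ℝ) (hw₀ : w₀ = Sum.elim x₀ (C⁻¹ *ᵥ (Bᵀ *ᵥ x₀ - g)))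
    -- the Schur complement system, preconditioner, right-hand side
    (M₂ P₂ : Matrix (Fin n) (Fin n) ℝ)
    (hM₂ : M₂ = A + B * C⁻¹ * Bᵀ) (hP₂ : P₂ = P + B * C⁻¹ * Bᵀ)
    (b₂ : Fin n → ℝ) (hb₂ : b₂ = f + B *ᵥ (C⁻¹ *ᵥ g))
    -- all scalar denominators through step `k` are nonzero, in both recursions
    (hden₁ : ∀ j < k,
      (pcgState M₁ P₁ b₁ w₀ j).2.2.2 ⬝ᵥ (M₁ *ᵥ (pcgState M₁ P₁ b₁ w₀ j).2.2.2) ≠ 0 ∧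
      (pcgState M₁ P₁ b₁ w₀ j).2.1 ⬝ᵥ (pcgState M₁ P₁ b₁ w₀ j).2.2.1 ≠ 0)
    (hden₂ : ∀ j < k,
      (pcgState M₂ P₂ b₂ x₀ j).2.2.2 ⬝ᵥ (M₂ *ᵥ (pcgState M₂ P₂ b₂ x₀ j).2.2.2) ≠ 0 ∧
      (pcgState M₂ P₂ b₂ x₀ j).2.1 ⬝ᵥ (pcgState M₂ P₂ b₂ x₀ j).2.2.1 ≠ 0) :
    (fun i => (pcgState M₁ P₁ b₁ w₀ k).1 (Sum.inl i)) = (pcgState M₂ P₂ b₂ x₀ k).1 ∧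
      (fun i => (pcgState M₁ P₁ b₁ w₀ k).1 (Sum.inr i)) =
        C⁻¹ *ᵥ (Bᵀ *ᵥ (pcgState M₂ P₂ b₂ x₀ k).1 - g) := by
  clear hden₁ hden₂
  -- basic invertibility / positivity facts
  have hCdet : IsUnit C.det := isUnit_iff_ne_zero.mpr (ne_of_gt hC.det_pos)
  haveI : Invertible C := C.invertibleOfIsUnitDet hCdet
  have hCC : C * C⁻¹ = 1 := Matrix.mul_nonsing_inv _ hCdet
  have hBCB : (B * C⁻¹ * Bᵀ).PosSemidef := by
    have h := hC.inv.posSemidef.mul_mul_conjTranspose_same B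
    rwa [conjTranspose_eq_transpose_of_trivial] at h
  have hP2pd : (P + B * C⁻¹ * Bᵀ).PosDef := hP.add_posSemidef hBCB
  have hP2det : IsUnit (P + B * C⁻¹ * Bᵀ).det :=
    isUnit_iff_ne_zero.mpr (ne_of_gt hP2pd.det_pos)
  have hP2det' : IsUnit P₂.det := by rw [hP₂]; exact hP2det
  haveI : Invertible (-C) := invertibleNeg C
  haveI : Invertible (P - B * ⅟(-C) * Bᵀ) := by
    have h : P - B * ⅟(-C) * Bᵀ = P + B * C⁻¹ * Bᵀ := by
      rw [invOf_neg, Matrix.invOf_eq_nonsing_inv, Matrix.mul_neg, Matrix.neg_mul,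
        sub_neg_eq_add]
    rw [h]
    exact (P + B * C⁻¹ * Bᵀ).invertibleOfIsUnitDet hP2det
  haveI hinvP1 : Invertible (Matrix.fromBlocks P B Bᵀ (-C)) :=
    Matrix.fromBlocks₂₂Invertible P B Bᵀ (-C)
  have hP1det : IsUnit P₁.det := by
    rw [hP₁]; exact Matrix.isUnit_det_of_invertible _
  -- pointwise lemmas on Sum.elim
  have elim_add : ∀ (a c : Fin n → ℝ) (b d : Fin r → ℝ),
      Sum.elim a b + Sum.elim c d = Sum.elim (a + c) (b + d) := by
    intro a c b d; funext i; cases i <;> simp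
  have elim_sub : ∀ (a c : Fin n → ℝ) (b d : Fin r → ℝ),
      Sum.elim a b - Sum.elim c d = Sum.elim (a - c) (b - d) := by
    intro a c b d; funext i; cases i <;> simp
  have elim_smul : ∀ (t : ℝ) (a : Fin n → ℝ) (b : Fin r → ℝ),
      t • Sum.elim a b = Sum.elim (t • a) (t • b) := by
    intro t a b; funext i; cases i <;> simp
  -- key block computations
  have key : ∀ (Q : Matrix (Fin n) (Fin n) ℝ) (u : Fin n → ℝ),
      (Matrix.fromBlocks Q B Bᵀ (-C)) *ᵥ Sum.elim u (C⁻¹ *ᵥ (Bᵀ *ᵥ u))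
        = Sum.elim ((Q + B * C⁻¹ * Bᵀ) *ᵥ u) 0 := by
    intro Q u
    have h1 : Bᵀ *ᵥ u + (-C) *ᵥ (C⁻¹ *ᵥ (Bᵀ *ᵥ u)) = 0 := by
      rw [Matrix.neg_mulVec, Matrix.mulVec_mulVec, hCC, Matrix.one_mulVec,
        add_neg_cancel]
    have h2 : Q *ᵥ u + B *ᵥ (C⁻¹ *ᵥ (Bᵀ *ᵥ u)) = (Q + B * C⁻¹ * Bᵀ) *ᵥ u := by
      rw [Matrix.add_mulVec, Matrix.mulVec_mulVec, Matrix.mulVec_mulVec,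
        Matrix.mul_assoc]
    rw [Matrix.fromBlocks_mulVec, Sum.elim_comp_inl, Sum.elim_comp_inr, h1, h2]
  have keyg : ∀ (Q : Matrix (Fin n) (Fin n) ℝ) (u : Fin n → ℝ),
      (Matrix.fromBlocks Q B Bᵀ (-C)) *ᵥ Sum.elim u (C⁻¹ *ᵥ (Bᵀ *ᵥ u - g))
        = Sum.elim ((Q + B * C⁻¹ * Bᵀ) *ᵥ u - B *ᵥ (C⁻¹ *ᵥ g)) g := by
    intro Q u
    have h1 : Bᵀ *ᵥ u + (-C) *ᵥ (C⁻¹ *ᵥ (Bᵀ *ᵥ u - g)) = g := by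
      rw [Matrix.neg_mulVec, Matrix.mulVec_mulVec, hCC, Matrix.one_mulVec]
      abel
    have h2 : Q *ᵥ u + B *ᵥ (C⁻¹ *ᵥ (Bᵀ *ᵥ u - g))
        = (Q + B * C⁻¹ * Bᵀ) *ᵥ u - B *ᵥ (C⁻¹ *ᵥ g) := by
      rw [Matrix.mulVec_sub, Matrix.mulVec_sub, Matrix.add_mulVec,
        Matrix.mulVec_mulVec, Matrix.mulVec_mulVec, Matrix.mulVec_mulVec,
        Matrix.mul_assoc]
      abel
    rw [Matrix.fromBlocks_mulVec, Sum.elim_comp_inl, Sum.elim_comp_inr, h1, h2]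
  -- applying the inverse of the indefinite preconditioner
  have hPinv : ∀ s : Fin n → ℝ,
      P₁⁻¹ *ᵥ Sum.elim s 0
        = Sum.elim (P₂⁻¹ *ᵥ s) (C⁻¹ *ᵥ (Bᵀ *ᵥ (P₂⁻¹ *ᵥ s))) := by
    intro s
    have h1 : P₁ *ᵥ Sum.elim (P₂⁻¹ *ᵥ s) (C⁻¹ *ᵥ (Bᵀ *ᵥ (P₂⁻¹ *ᵥ s)))
        = Sum.elim s 0 := by
      rw [hP₁, key P, ← hP₂, Matrix.mulVec_mulVec,
        Matrix.mul_nonsing_inv _ hP2det', Matrix.one_mulVec]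
    calc P₁⁻¹ *ᵥ Sum.elim s 0
        = P₁⁻¹ *ᵥ (P₁ *ᵥ Sum.elim (P₂⁻¹ *ᵥ s) (C⁻¹ *ᵥ (Bᵀ *ᵥ (P₂⁻¹ *ᵥ s)))) := by
          rw [h1]
      _ = _ := by
          rw [Matrix.mulVec_mulVec, Matrix.nonsing_inv_mul _ hP1det,
            Matrix.one_mulVec]
  -- the main invariant, by induction
  have main : ∀ j : ℕ,
      (pcgState M₁ P₁ b₁ w₀ j).1
        = Sum.elim (pcgState M₂ P₂ b₂ x₀ j).1
            (C⁻¹ *ᵥ (Bᵀ *ᵥ (pcgState M₂ P₂ b₂ x₀ j).1 - g)) ∧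
      (pcgState M₁ P₁ b₁ w₀ j).2.1 = Sum.elim (pcgState M₂ P₂ b₂ x₀ j).2.1 0 ∧
      (pcgState M₁ P₁ b₁ w₀ j).2.2.1
        = Sum.elim (pcgState M₂ P₂ b₂ x₀ j).2.2.1
            (C⁻¹ *ᵥ (Bᵀ *ᵥ (pcgState M₂ P₂ b₂ x₀ j).2.2.1)) ∧
      (pcgState M₁ P₁ b₁ w₀ j).2.2.2
        = Sum.elim (pcgState M₂ P₂ b₂ x₀ j).2.2.2
            (C⁻¹ *ᵥ (Bᵀ *ᵥ (pcgState M₂ P₂ b₂ x₀ j).2.2.2)) := by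
    intro j
    induction j with
    | zero =>
      have hr0 : b₁ - M₁ *ᵥ w₀ = Sum.elim (b₂ - M₂ *ᵥ x₀) 0 := by
        rw [hb₁, hM₁, hw₀, keyg A x₀, elim_sub, ← hM₂, sub_self, hb₂]
        congr 1
        abel
      refine ⟨?_, ?_, ?_, ?_⟩
      · simp only [pcgState]; exact hw₀
      · simp only [pcgState]; exact hr0
      · simp only [pcgState]; rw [hr0, hPinv]
      · simp only [pcgState]; rw [hr0, hPinv]
    | succ j ih =>
      obtain ⟨ihx, ihr, ihz, ihp⟩ := ih
      rw [pcgState_succ, pcgState_succ]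
      set s₁ := pcgState M₁ P₁ b₁ w₀ j with hs₁
      set s₂ := pcgState M₂ P₂ b₂ x₀ j with hs₂
      have hMp : M₁ *ᵥ s₁.2.2.2 = Sum.elim (M₂ *ᵥ s₂.2.2.2) 0 := by
        rw [ihp, hM₁, key A, ← hM₂]
      have hαd : s₁.2.2.2 ⬝ᵥ (M₁ *ᵥ s₁.2.2.2) = s₂.2.2.2 ⬝ᵥ (M₂ *ᵥ s₂.2.2.2) := by
        rw [hMp, ihp, sumElim_dotProduct_sumElim]; simp
      have hαn : s₁.2.1 ⬝ᵥ s₁.2.2.1 = s₂.2.1 ⬝ᵥ s₂.2.2.1 := by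
        rw [ihr, ihz, sumElim_dotProduct_sumElim]; simp
      set α := (s₂.2.1 ⬝ᵥ s₂.2.2.1) / (s₂.2.2.2 ⬝ᵥ (M₂ *ᵥ s₂.2.2.2)) with hα
      have hx' : s₁.1 + α • s₁.2.2.2
          = Sum.elim (s₂.1 + α • s₂.2.2.2)
              (C⁻¹ *ᵥ (Bᵀ *ᵥ (s₂.1 + α • s₂.2.2.2) - g)) := by
        rw [ihx, ihp, elim_smul, elim_add]
        congr 1
        have h2 : Bᵀ *ᵥ (s₂.1 + α • s₂.2.2.2) - g
            = (Bᵀ *ᵥ s₂.1 - g) + α • (Bᵀ *ᵥ s₂.2.2.2) := by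
          rw [Matrix.mulVec_add, Matrix.mulVec_smul]; abel
        rw [h2, Matrix.mulVec_add, Matrix.mulVec_smul]
      have hr' : s₁.2.1 - α • (M₁ *ᵥ s₁.2.2.2)
          = Sum.elim (s₂.2.1 - α • (M₂ *ᵥ s₂.2.2.2)) 0 := by
        rw [ihr, hMp, elim_smul, elim_sub]
        congr 1
        simp
      have hz' : P₁⁻¹ *ᵥ (s₁.2.1 - α • (M₁ *ᵥ s₁.2.2.2))
          = Sum.elim (P₂⁻¹ *ᵥ (s₂.2.1 - α • (M₂ *ᵥ s₂.2.2.2)))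
              (C⁻¹ *ᵥ (Bᵀ *ᵥ (P₂⁻¹ *ᵥ (s₂.2.1 - α • (M₂ *ᵥ s₂.2.2.2))))) := by
        rw [hr', hPinv]
      have hβn : (s₁.2.1 - α • (M₁ *ᵥ s₁.2.2.2)) ⬝ᵥ (P₁⁻¹ *ᵥ (s₁.2.1 - α • (M₁ *ᵥ s₁.2.2.2)))
          = (s₂.2.1 - α • (M₂ *ᵥ s₂.2.2.2)) ⬝ᵥ (P₂⁻¹ *ᵥ (s₂.2.1 - α • (M₂ *ᵥ s₂.2.2.2))) := by
        rw [hz', hr', sumElim_dotProduct_sumElim]; simp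
      set β := ((s₂.2.1 - α • (M₂ *ᵥ s₂.2.2.2)) ⬝ᵥ (P₂⁻¹ *ᵥ (s₂.2.1 - α • (M₂ *ᵥ s₂.2.2.2))))
          / (s₂.2.1 ⬝ᵥ s₂.2.2.1) with hβ
      have hp' : P₁⁻¹ *ᵥ (s₁.2.1 - α • (M₁ *ᵥ s₁.2.2.2)) + β • s₁.2.2.2
          = Sum.elim (P₂⁻¹ *ᵥ (s₂.2.1 - α • (M₂ *ᵥ s₂.2.2.2)) + β • s₂.2.2.2)
              (C⁻¹ *ᵥ (Bᵀ *ᵥ (P₂⁻¹ *ᵥ (s₂.2.1 - α • (M₂ *ᵥ s₂.2.2.2)) + β • s₂.2.2.2))) := by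
        rw [hz', ihp, elim_smul, elim_add]
        congr 1
        rw [Matrix.mulVec_add, Matrix.mulVec_smul, Matrix.mulVec_add, Matrix.mulVec_smul]
      simp only [pcgStep, hαd, hαn, ← hα]
      exact ⟨hx', hr', hz', by rw [hβn, ← hβ]; exact hp'⟩
  obtain ⟨hx, -, -, -⟩ := main k
  constructor
  · funext i; rw [hx]; rfl
  · funext i; rw [hx]; rfl
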